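/- Let {P_s^opt ∈ 𝕆^{n_s×k}}_{s=1}^v be a local maximizer of f_θ over the product of Stiefel manifolds with f_θ({P_s^opt}) ≥ 0, and for each s evaluate α_s, β_s, D̂_s, Â_s, B̂_s, and E_s at {P_{s'}^opt}_{s'=1}^v. If (P_s^opt)ᵀ D̂_s is symmetric positive semidefinite, then P_s^opt is an orthonormal basis matrix of the invariant subspace of E_s(P_s^opt) associated with its k largest eigenvalues, i.e. E_s(P_s^opt)·P_s^opt = P_s^opt·((P_s^opt)ᵀE_s(P_s^opt)P_s^opt) and tr((P_s^opt)ᵀE_s(P_s^opt)P_s^opt) equals the sum of the k largest eigenvalues of the symmetric matrix E_s(P_s^opt). -/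

import Mathlib

open Matrix Finset

noncomputable section

/-- The multi-view objective
`f_θ({P_s}) = (Σ_{s,t} tr(P_sᵀ A_{s,t} P_t)) / (Σ_s tr(P_sᵀ B_s P_s))^θ`. -/
def fmv {v k : ℕ} (n : Fin v → ℕ)
    (A : ∀ s t : Fin v, Matrix (Fin (n s)) (Fin (n t)) ℝ)
    (B : ∀ s : Fin v, Matrix (Fin (n s)) (Fin (n s)) ℝ) (θ : ℝ)
    (P : ∀ s : Fin v, Matrix (Fin (n s)) (Fin k) ℝ) : ℝ :=
  (∑ s, ∑ t, trace ((P s)ᵀ * A s t * P t)) / (∑ s, trace ((P s)ᵀ * B s * P s)) ^ θ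

/-!
Freeze every block but the `s`-th. By Bernoulli's inequality `x ^ θ ≤ 1 + θ (x - 1)`, a local
maximizer of `f_θ` with `f_θ ≥ 0` makes `P_s` a local maximizer, on the Stiefel manifold, of
`X ↦ tr (Xᵀ C X) + tr (Xᵀ D̂_s)` with `C = Â_s - θ f₁ B̂_s`. The identity shifts in `Â_s` and
`B̂_s` turn the constant terms `α_s`, `β_s` into such traces.

To perturb `P_s`, rotate a column direction `P_s z` towards a unit vector `u ⊥ range P_s`. The
resulting curve stays on the Stiefel manifold. The first-order condition along these curves
says that `range P_s` is invariant under `E_s`. The second-order condition, together with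
`P_sᵀ D̂_s ⪰ 0`, says that every Rayleigh quotient of `E_s` on `(range P_s)ᗮ` is at most every
Rayleigh quotient on `range P_s`.

Finally split each eigenvector `q_i` of `E_s` as `P_s a_i + r_i`. Then
`tr (P_sᵀ E_s P_s) = ∑ μ_i |a_i|²`, and the weights `|a_i|²` lie in `[0, 1]` and sum to `k`.
The separation of Rayleigh quotients puts all the weight on the `k` largest eigenvalues.
-/

open Filter Topology Real

theorem sum_mul_le_sum_mul_of_threshold {ι : Type*} [Fintype ι] (μ σ χ : ι → ℝ) (c : ℝ)
    (hsum : ∑ i, σ i = ∑ i, χ i) (h : ∀ i, (μ i - c) * (σ i - χ i) ≤ 0) :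
    ∑ i, μ i * σ i ≤ ∑ i, μ i * χ i := by
  have key : ∑ i, μ i * σ i - ∑ i, μ i * χ i = ∑ i, (μ i - c) * (σ i - χ i) := by
    simp only [sub_mul, mul_sub, sum_sub_distrib, ← mul_sum, hsum]
    ring
  linarith [sum_nonpos fun i (_ : i ∈ univ) => h i]

theorem sum_mul_ite_lt_eq_sum_castLE {N k : ℕ} (hkN : k ≤ N) (f : Fin N → ℝ) :
    ∑ i, f i * (if (i : ℕ) < k then 1 else 0) = ∑ i : Fin k, f (Fin.castLE hkN i) := by
  simp only [mul_ite, mul_one, mul_zero, ← sum_filter]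
  trans ∑ i ∈ univ.map (Fin.castLEEmb hkN), f i
  · congr 1
    ext i
    simp only [mem_filter, mem_univ, true_and, Finset.mem_map, Fin.castLEEmb_apply]
    exact ⟨fun h => ⟨⟨i, h⟩, rfl⟩, by rintro ⟨j, rfl⟩; exact j.isLt⟩
  · exact sum_map _ _ _

theorem sum_mul_eq_sum_castLE_of_separated {N k : ℕ} (hk : 0 < k) (hkN : k ≤ N)
    {μ σ : Fin N → ℝ} (hμ : Antitone μ) (hσ0 : ∀ i, 0 ≤ σ i) (hσ1 : ∀ i, σ i ≤ 1)
    (hσ : ∑ i, σ i = k)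
    (hsep : ∀ i j, σ i < 1 → 0 < σ j → μ i ≤ μ j) :
    ∑ i, μ i * σ i = ∑ i : Fin k, μ (Fin.castLE hkN i) := by
  set χ : Fin N → ℝ := fun i => if (i : ℕ) < k then 1 else 0
  have hχ : ∑ i, σ i = ∑ i, χ i := by
    have := sum_mul_ite_lt_eq_sum_castLE hkN 1
    simp only [Pi.one_apply, one_mul, sum_const, card_univ, Fintype.card_fin, nsmul_eq_mul,
      mul_one] at this
    rw [hσ, this]
  rw [← sum_mul_ite_lt_eq_sum_castLE hkN]
  refine le_antisymm ?_ ?_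
  · refine sum_mul_le_sum_mul_of_threshold μ σ χ (μ ⟨k - 1, by omega⟩) hχ fun i => ?_
    by_cases hik : (i : ℕ) < k
    · have : μ ⟨k - 1, by omega⟩ ≤ μ i := hμ (Fin.mk_le_mk.2 (by omega))
      simp only [χ, if_pos hik]
      nlinarith [hσ1 i]
    · have : μ i ≤ μ ⟨k - 1, by omega⟩ := hμ (Fin.mk_le_mk.2 (by omega))
      simp only [χ, if_neg hik]
      nlinarith [hσ0 i]
  · -- threshold: the least `μ j` with positive weight `σ j`
    have hne : (univ.filter fun j => 0 < σ j).Nonempty := by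
      by_contra h
      have : ∑ i, σ i = 0 := sum_eq_zero fun i _ => le_antisymm
        (not_lt.1 fun hi => h ⟨i, mem_filter.2 ⟨mem_univ i, hi⟩⟩) (hσ0 i)
      have : (0 : ℝ) < k := by exact_mod_cast hk
      linarith
    obtain ⟨j₀, hj₀, hmin⟩ := exists_min_image _ μ hne
    have hσj₀ : 0 < σ j₀ := (mem_filter.1 hj₀).2
    refine sum_mul_le_sum_mul_of_threshold μ χ σ (μ j₀) hχ.symm fun i => ?_
    by_cases hik : (i : ℕ) < k
    · simp only [χ, if_pos hik]
      rcases (hσ1 i).lt_or_eq with hi | hi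
      · nlinarith [hsep i j₀ hi hσj₀]
      · simp [hi]
    · simp only [χ, if_neg hik]
      rcases (hσ0 i).lt_or_eq with hi | hi
      · nlinarith [hmin i (mem_filter.2 ⟨mem_univ i, hi⟩)]
      · simp [← hi]

theorem eq_zero_of_isLocalMax_sin_mul_add {g X d e : ℝ}
    (h : IsLocalMax (fun t => sin t * g + (1 - cos t) * ((1 + cos t) * X - d - 2 * sin t * e))
      0) :
    g = 0 := by
  have hh : DifferentiableAt ℝ (fun t => (1 + cos t) * X - d - 2 * sin t * e) 0 := by
    fun_prop
  have hderiv := ((hasDerivAt_sin 0).mul_const g).add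
    (((hasDerivAt_const 0 1).sub (hasDerivAt_cos 0)).mul hh.hasDerivAt)
  simpa using h.hasDerivAt_eq_zero hderiv

theorem le_of_isLocalMax_one_sub_cos_mul {X d e : ℝ}
    (h : IsLocalMax (fun t => (1 - cos t) * ((1 + cos t) * X - d - 2 * sin t * e)) 0) :
    2 * X ≤ d := by
  have hcont : Continuous fun t => (1 + cos t) * X - d - 2 * sin t * e := by fun_prop
  have hcos : ∀ᶠ t in 𝓝[≠] (0 : ℝ), 0 < 1 - cos t := by
    have hball : Set.Ioo (-(2 * π)) (2 * π) ∈ 𝓝 (0 : ℝ) :=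
      Ioo_mem_nhds (by linarith [pi_pos]) (by linarith [pi_pos])
    filter_upwards [nhdsWithin_le_nhds hball, self_mem_nhdsWithin] with t ht ht0
    have := (cos_eq_one_iff_of_lt_of_lt ht.1 ht.2).not.2 ht0
    linarith [(cos_le_one t).lt_of_ne this]
  have hle : ∀ᶠ t in 𝓝[≠] (0 : ℝ), (1 + cos t) * X - d - 2 * sin t * e ≤ 0 := by
    filter_upwards [nhdsWithin_le_nhds h, hcos] with t ht hpos
    simp only [cos_zero, sin_zero, sub_self, zero_mul] at ht
    exact nonpos_of_mul_nonpos_right ht hpos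
  have := le_of_tendsto (hcont.continuousAt.tendsto.mono_left nhdsWithin_le_nhds) hle
  simp only [cos_zero, sin_zero] at this
  linarith

section Spectral

variable {m κ n : Type*} [Fintype m]

theorem dotProduct_self_nonneg (u : m → ℝ) : 0 ≤ u ⬝ᵥ u :=
  sum_nonneg fun i _ => mul_self_nonneg (u i)

theorem mulVec_transpose_col {l : Type*} (A : Matrix l m ℝ) (X : Matrix m n ℝ) (i : n) :
    A *ᵥ Xᵀ i = (A * X)ᵀ i := by
  ext l
  simp [mulVec, dotProduct, mul_apply]

theorem dotProduct_mulVec_col_of_mul_eq_mul_diagonal [Fintype n] [DecidableEq n]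
    {A : Matrix m m ℝ} {X : Matrix m n ℝ} {μ : n → ℝ} (h : A * X = X * diagonal μ) (i : n) :
    Xᵀ i ⬝ᵥ A *ᵥ Xᵀ i = μ i * (Xᵀ i ⬝ᵥ Xᵀ i) := by
  have : A *ᵥ Xᵀ i = μ i • Xᵀ i := by
    ext l
    simp [mulVec_transpose_col, h, mul_comm]
  rw [this, dotProduct_smul, smul_eq_mul]

theorem transpose_mul_add_transpose_mul_perp [Fintype κ] [DecidableEq κ] [DecidableEq n]
    {P : Matrix m κ ℝ} (hP : Pᵀ * P = 1) {Q : Matrix m n ℝ} (hQ : Qᵀ * Q = 1) :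
    (Pᵀ * Q)ᵀ * (Pᵀ * Q) + (Q - P * (Pᵀ * Q))ᵀ * (Q - P * (Pᵀ * Q)) = 1 := by
  rw [← hQ]
  simp only [transpose_mul, transpose_transpose, transpose_sub, Matrix.mul_sub, Matrix.sub_mul,
    Matrix.mul_assoc]
  simp only [← Matrix.mul_assoc Pᵀ P, hP, Matrix.one_mul]
  abel

theorem mul_eq_mul_diagonal_of_invariant [Fintype κ] [Fintype n] [DecidableEq κ]
    [DecidableEq n] {E : Matrix m m ℝ} (hE : Eᵀ = E) {P : Matrix m κ ℝ}
    (hinv : E * P = P * (Pᵀ * E * P)) {Q : Matrix m n ℝ} {μ : n → ℝ}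
    (hEQ : E * Q = Q * diagonal μ) :
    (Pᵀ * E * P) * (Pᵀ * Q) = (Pᵀ * Q) * diagonal μ
      ∧ E * (Q - P * (Pᵀ * Q)) = (Q - P * (Pᵀ * Q)) * diagonal μ := by
  have hPE : Pᵀ * E = (Pᵀ * E * P) * Pᵀ := by
    simpa only [transpose_mul, transpose_transpose, hE, Matrix.mul_assoc]
      using congrArg transpose hinv
  have hM : (Pᵀ * E * P) * (Pᵀ * Q) = (Pᵀ * Q) * diagonal μ := by
    rw [← Matrix.mul_assoc, ← hPE, Matrix.mul_assoc, hEQ, Matrix.mul_assoc]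
  refine ⟨hM, ?_⟩
  rw [Matrix.mul_sub, hEQ, ← Matrix.mul_assoc, hinv, Matrix.mul_assoc, hM, Matrix.sub_mul,
    Matrix.mul_assoc, Matrix.mul_assoc, Matrix.mul_assoc]

theorem trace_conj_diagonal_eq_sum [Fintype κ] [Fintype n] [DecidableEq n] (P : Matrix m κ ℝ)
    (Q : Matrix m n ℝ) (μ : n → ℝ) :
    trace (Pᵀ * (Q * diagonal μ * Qᵀ) * P) = ∑ i, μ i * ((Pᵀ * Q)ᵀ i ⬝ᵥ (Pᵀ * Q)ᵀ i) := by
  rw [show Pᵀ * (Q * diagonal μ * Qᵀ) * P = (Pᵀ * Q) * diagonal μ * (Pᵀ * Q)ᵀ by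
    simp only [transpose_mul, transpose_transpose, Matrix.mul_assoc], trace_mul_comm,
    ← Matrix.mul_assoc]
  simp only [trace, diag_apply, mul_diagonal]
  exact sum_congr rfl fun i _ => mul_comm _ _

theorem sum_dotProduct_transpose_mul_self [Fintype κ] [Fintype n] [DecidableEq κ]
    [DecidableEq m] {P : Matrix m κ ℝ} (hP : Pᵀ * P = 1) {Q : Matrix m n ℝ} (hQ : Q * Qᵀ = 1) :
    ∑ i, (Pᵀ * Q)ᵀ i ⬝ᵥ (Pᵀ * Q)ᵀ i = Fintype.card κ := by
  calc ∑ i, (Pᵀ * Q)ᵀ i ⬝ᵥ (Pᵀ * Q)ᵀ i = trace ((Pᵀ * Q)ᵀ * (Pᵀ * Q)) := rfl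
    _ = trace (Pᵀ * (Q * Qᵀ) * P) := by
      rw [trace_mul_comm]
      simp only [transpose_mul, transpose_transpose, Matrix.mul_assoc]
    _ = Fintype.card κ := by rw [hQ, Matrix.mul_one, hP, trace_one]

theorem trace_eq_sum_top_eigenvalues_of_rayleigh_le {N k : ℕ} (hk : 0 < k) (hkN : k ≤ N)
    {E Q : Matrix (Fin N) (Fin N) ℝ} {μ : Fin N → ℝ} (hμ : Antitone μ) (hQ : Qᵀ * Q = 1)
    (hEig : E = Q * diagonal μ * Qᵀ) {P : Matrix (Fin N) (Fin k) ℝ} (hP : Pᵀ * P = 1)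
    (hinv : E * P = P * (Pᵀ * E * P))
    (hsep : ∀ u z, Pᵀ *ᵥ u = 0 →
      (u ⬝ᵥ E *ᵥ u) * (z ⬝ᵥ z) ≤ ((P *ᵥ z) ⬝ᵥ E *ᵥ (P *ᵥ z)) * (u ⬝ᵥ u)) :
    trace (Pᵀ * E * P) = ∑ i : Fin k, μ (Fin.castLE hkN i) := by
  have hE : Eᵀ = E := by
    rw [hEig, transpose_mul, transpose_mul, diagonal_transpose, transpose_transpose,
      Matrix.mul_assoc]
  have hEQ : E * Q = Q * diagonal μ := by
    rw [hEig, Matrix.mul_assoc _ Qᵀ, hQ, Matrix.mul_one]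
  obtain ⟨hMY, hER⟩ := mul_eq_mul_diagonal_of_invariant hE hinv hEQ
  -- the eigenvector `Qᵀ i` splits as `P *ᵥ Yᵀ i + Rᵀ i` with `Rᵀ i ⊥ range P`
  set Y := Pᵀ * Q
  set R := Q - P * Y
  have hYR : ∀ i, Yᵀ i ⬝ᵥ Yᵀ i + Rᵀ i ⬝ᵥ Rᵀ i = 1 := fun i => by
    have := congrFun (congrFun (transpose_mul_add_transpose_mul_perp hP hQ) i) i
    rwa [Matrix.add_apply, one_apply_eq] at this
  have hsum : ∑ i, Yᵀ i ⬝ᵥ Yᵀ i = k := by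
    rw [sum_dotProduct_transpose_mul_self hP (mul_eq_one_comm.1 hQ), Fintype.card_fin]
  have hRperp : ∀ i, Pᵀ *ᵥ Rᵀ i = 0 := fun i => by
    rw [mulVec_transpose_col, show Pᵀ * R = 0 by
      rw [Matrix.mul_sub, ← Matrix.mul_assoc, hP, Matrix.one_mul, sub_self]]
    rfl
  have hrange : ∀ z, (P *ᵥ z) ⬝ᵥ E *ᵥ (P *ᵥ z) = z ⬝ᵥ (Pᵀ * E * P) *ᵥ z := fun z => by
    rw [← Matrix.mulVec_mulVec, ← Matrix.mulVec_mulVec, dotProduct_mulVec z Pᵀ,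
      vecMul_transpose]
  have hsep' : ∀ i j, Yᵀ i ⬝ᵥ Yᵀ i < 1 → 0 < Yᵀ j ⬝ᵥ Yᵀ j → μ i ≤ μ j := by
    intro i j hi hj
    have h := hsep (Rᵀ i) (Yᵀ j) (hRperp i)
    rw [dotProduct_mulVec_col_of_mul_eq_mul_diagonal hER, hrange,
      dotProduct_mulVec_col_of_mul_eq_mul_diagonal hMY] at h
    refine le_of_mul_le_mul_right (a := (Rᵀ i ⬝ᵥ Rᵀ i) * (Yᵀ j ⬝ᵥ Yᵀ j)) (by linarith) ?_
    exact mul_pos (by linarith [hYR i]) hj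
  rw [hEig, trace_conj_diagonal_eq_sum]
  exact sum_mul_eq_sum_castLE_of_separated hk hkN hμ (fun i => dotProduct_self_nonneg _)
    (fun i => by linarith [hYR i, dotProduct_self_nonneg (Rᵀ i)]) hsum hsep'

end Spectral

section Stiefel

variable {m κ : Type*} [Fintype κ]

def stiefel (m κ : Type*) [Fintype m] [DecidableEq κ] : Set (Matrix m κ ℝ) :=
  {X | Xᵀ * X = 1}

def traceQuadLin [Fintype m] (C : Matrix m m ℝ) (D X : Matrix m κ ℝ) : ℝ :=
  trace (Xᵀ * C * X) + trace (Xᵀ * D)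

/-- Rotates the column direction `P *ᵥ z` towards `u` by the angle `t`. -/
def stiefelCurve (P : Matrix m κ ℝ) (u : m → ℝ) (z : κ → ℝ) (t : ℝ) : Matrix m κ ℝ :=
  P + vecMulVec ((cos t - 1) • (P *ᵥ z) + sin t • u) z

theorem stiefelCurve_zero (P : Matrix m κ ℝ) (u : m → ℝ) (z : κ → ℝ) :
    stiefelCurve P u z 0 = P := by
  simp [stiefelCurve]

theorem continuous_stiefelCurve (P : Matrix m κ ℝ) (u : m → ℝ) (z : κ → ℝ) :
    Continuous (stiefelCurve P u z) := by
  unfold stiefelCurve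
  fun_prop

theorem stiefelCurve_mem [Fintype m] [DecidableEq κ] {P : Matrix m κ ℝ} (hP : P ∈ stiefel m κ)
    {u : m → ℝ} {z : κ → ℝ} (hu : u ⬝ᵥ u = 1) (hup : Pᵀ *ᵥ u = 0) (hz : z ⬝ᵥ z = 1) (t : ℝ) :
    stiefelCurve P u z t ∈ stiefel m κ := by
  have hP' : Pᵀ * P = 1 := hP
  set x := (cos t - 1) • (P *ᵥ z) + sin t • u
  have hPx : Pᵀ *ᵥ x = (cos t - 1) • z := by
    simp [x, Matrix.mulVec_add, Matrix.mulVec_smul, hup, Matrix.mulVec_mulVec, hP']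
  have hxx : x ⬝ᵥ x = (cos t - 1) ^ 2 + sin t ^ 2 := by
    have hPzu : (P *ᵥ z) ⬝ᵥ u = 0 := by
      rw [dotProduct_comm, dotProduct_mulVec, ← mulVec_transpose, hup, zero_dotProduct]
    have hPzPz : (P *ᵥ z) ⬝ᵥ (P *ᵥ z) = 1 := by
      rw [dotProduct_mulVec, ← mulVec_transpose, Matrix.mulVec_mulVec, hP', one_mulVec,
        dotProduct_comm, hz]
    simp only [x, dotProduct_add, add_dotProduct, dotProduct_smul, smul_dotProduct,
      smul_eq_mul, hPzu, dotProduct_comm u (P *ᵥ z), hPzPz, hu]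
    ring
  show (P + vecMulVec x z)ᵀ * (P + vecMulVec x z) = 1
  rw [transpose_add, transpose_vecMulVec, Matrix.add_mul, Matrix.mul_add, Matrix.mul_add, hP',
    mul_vecMulVec, vecMulVec_mul, vecMulVec_mul_vecMulVec, hPx, ← mulVec_transpose, hPx, hxx,
    smul_vecMulVec, vecMulVec_smul, vecMulVec_smul, add_assoc, ← add_smul, ← add_smul]
  have : cos t - 1 + ((cos t - 1) + ((cos t - 1) ^ 2 + sin t ^ 2)) = 0 := by
    linear_combination sin_sq_add_cos_sq t
  rw [this, zero_smul, add_zero]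

theorem traceQuadLin_sub_smul [Fintype m] (C C' : Matrix m m ℝ) (D X : Matrix m κ ℝ) (c : ℝ) :
    traceQuadLin (C - c • C') D X = traceQuadLin C D X - c * trace (Xᵀ * C' * X) := by
  rw [traceQuadLin, traceQuadLin, Matrix.mul_sub, Matrix.sub_mul, trace_sub, Matrix.mul_smul,
    Matrix.smul_mul, trace_smul, smul_eq_mul]
  ring

theorem trace_conj_add_smul_one [Fintype m] [DecidableEq m] [DecidableEq κ]
    {X : Matrix m κ ℝ} (hX : X ∈ stiefel m κ) (A : Matrix m m ℝ) (r : ℝ) :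
    trace (Xᵀ * (A + r • 1) * X) = trace (Xᵀ * A * X) + r * Fintype.card κ := by
  rw [Matrix.mul_add, Matrix.add_mul, trace_add, Matrix.mul_smul, Matrix.smul_mul,
    Matrix.mul_one, show Xᵀ * X = 1 from hX, trace_smul, trace_one, smul_eq_mul]

theorem traceQuadLin_add_vecMulVec [Fintype m] {C : Matrix m m ℝ} (hC : Cᵀ = C)
    (D P : Matrix m κ ℝ) (x : m → ℝ) (z : κ → ℝ) :
    traceQuadLin C D (P + vecMulVec x z) = traceQuadLin C D P + 2 * (x ⬝ᵥ C *ᵥ (P *ᵥ z))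
      + (x ⬝ᵥ C *ᵥ x) * (z ⬝ᵥ z) + x ⬝ᵥ D *ᵥ z := by
  have hsym : ∀ y w : m → ℝ, y ⬝ᵥ C *ᵥ w = w ⬝ᵥ C *ᵥ y := fun y w => by
    rw [dotProduct_mulVec, ← mulVec_transpose, hC, dotProduct_comm]
  simp only [traceQuadLin, transpose_add, transpose_vecMulVec, Matrix.add_mul, Matrix.mul_add,
    trace_add, Matrix.mul_assoc, mul_vecMulVec, vecMulVec_mul, trace_vecMulVec]
  have h1 : z ⬝ᵥ x ᵥ* C ᵥ* P = x ⬝ᵥ C *ᵥ (P *ᵥ z) := by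
    rw [dotProduct_comm, ← dotProduct_mulVec, ← dotProduct_mulVec]
  have h2 : (Pᵀ * C) *ᵥ x ⬝ᵥ z = x ⬝ᵥ C *ᵥ (P *ᵥ z) := by
    rw [← Matrix.mulVec_mulVec, mulVec_transpose, ← dotProduct_mulVec, hsym, dotProduct_comm]
  have h3 : vecMulVec z (x ᵥ* C) *ᵥ x ⬝ᵥ z = (x ⬝ᵥ C *ᵥ x) * (z ⬝ᵥ z) := by
    rw [vecMulVec_mulVec, op_smul_eq_smul, smul_dotProduct, smul_eq_mul, dotProduct_mulVec]
  have h4 : z ⬝ᵥ x ᵥ* D = x ⬝ᵥ D *ᵥ z := by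
    rw [dotProduct_comm, ← dotProduct_mulVec]
  rw [Matrix.add_mulVec, add_dotProduct, h1, h2, h3, h4]
  ring

/-- The factor `1 - cos t` vanishes to second order at `t = 0`: the coefficient of `sin t` is
the first-order term and the bracket at `t = 0` the second-order one. -/
theorem traceQuadLin_stiefelCurve [Fintype m] {C : Matrix m m ℝ} (hC : Cᵀ = C)
    (D P : Matrix m κ ℝ) (u : m → ℝ) {z : κ → ℝ} (hz : z ⬝ᵥ z = 1) (t : ℝ) :
    traceQuadLin C D (stiefelCurve P u z t) = traceQuadLin C D P
      + (sin t * (2 * (u ⬝ᵥ C *ᵥ (P *ᵥ z)) + u ⬝ᵥ D *ᵥ z)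
        + (1 - cos t) * ((1 + cos t) * (u ⬝ᵥ C *ᵥ u - (P *ᵥ z) ⬝ᵥ C *ᵥ (P *ᵥ z))
          - (P *ᵥ z) ⬝ᵥ D *ᵥ z - 2 * sin t * (u ⬝ᵥ C *ᵥ (P *ᵥ z)))) := by
  have hsym : (P *ᵥ z) ⬝ᵥ C *ᵥ u = u ⬝ᵥ C *ᵥ (P *ᵥ z) := by
    rw [dotProduct_mulVec, ← mulVec_transpose, hC, dotProduct_comm]
  rw [stiefelCurve, traceQuadLin_add_vecMulVec hC, hz]
  simp only [Matrix.mulVec_add, Matrix.mulVec_smul, dotProduct_add, add_dotProduct,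
    dotProduct_smul, smul_dotProduct, smul_eq_mul, hsym]
  linear_combination (u ⬝ᵥ C *ᵥ u) * sin_sq_add_cos_sq t

theorem IsLocalMaxOn.isLocalMax_stiefelCurve [Fintype m] [DecidableEq κ] {C : Matrix m m ℝ}
    {D P : Matrix m κ ℝ} (h : IsLocalMaxOn (traceQuadLin C D) (stiefel m κ) P) (hC : Cᵀ = C)
    (hP : P ∈ stiefel m κ) {u : m → ℝ} {z : κ → ℝ} (hu : u ⬝ᵥ u = 1) (hup : Pᵀ *ᵥ u = 0)
    (hz : z ⬝ᵥ z = 1) :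
    IsLocalMax (fun t => sin t * (2 * (u ⬝ᵥ C *ᵥ (P *ᵥ z)) + u ⬝ᵥ D *ᵥ z)
      + (1 - cos t) * ((1 + cos t) * (u ⬝ᵥ C *ᵥ u - (P *ᵥ z) ⬝ᵥ C *ᵥ (P *ᵥ z))
        - (P *ᵥ z) ⬝ᵥ D *ᵥ z - 2 * sin t * (u ⬝ᵥ C *ᵥ (P *ᵥ z)))) 0 := by
  have hcurve : Tendsto (stiefelCurve P u z) (𝓝 0) (𝓝[stiefel m κ] P) := by
    refine tendsto_nhdsWithin_iff.2 ⟨?_, .of_forall (stiefelCurve_mem hP hu hup hz)⟩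
    simpa only [stiefelCurve_zero] using (continuous_stiefelCurve P u z).tendsto 0
  have hmax : IsLocalMax (traceQuadLin C D ∘ stiefelCurve P u z) 0 :=
    IsMaxFilter.comp_tendsto (by rwa [stiefelCurve_zero]) hcurve
  filter_upwards [hmax] with t ht
  simp only [Function.comp_apply, traceQuadLin_stiefelCurve hC D P u hz] at ht
  exact le_of_add_le_add_left ht

end Stiefel

section Optimality

variable {m κ : Type*} [Fintype m] [Fintype κ] [DecidableEq κ]

theorem exists_pos_sq_mul_dotProduct_self_eq_one {u : m → ℝ} (hu : u ≠ 0) :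
    ∃ r : ℝ, 0 < r ∧ r ^ 2 * (u ⬝ᵥ u) = 1 := by
  have hpos : 0 < u ⬝ᵥ u :=
    (dotProduct_self_nonneg u).lt_of_ne (Ne.symm (dotProduct_self_eq_zero.not.2 hu))
  refine ⟨(√(u ⬝ᵥ u))⁻¹, by positivity, ?_⟩
  rw [inv_pow, sq_sqrt hpos.le, inv_mul_cancel₀ hpos.ne']

theorem eq_mul_transpose_mul_of_dotProduct_eq_zero {n : Type*} [Fintype n] {P : Matrix m κ ℝ}
    (hP : Pᵀ * P = 1) {M : Matrix m n ℝ} (h : ∀ u z, Pᵀ *ᵥ u = 0 → u ⬝ᵥ M *ᵥ z = 0) :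
    M = P * (Pᵀ * M) := by
  classical
  have hPR : Pᵀ * (M - P * (Pᵀ * M)) = 0 := by
    rw [Matrix.mul_sub, ← Matrix.mul_assoc, hP, Matrix.one_mul, sub_self]
  rw [← sub_eq_zero]
  ext i j
  set x := (M - P * (Pᵀ * M)) *ᵥ Pi.single j 1 with hx
  have hu : Pᵀ *ᵥ x = 0 := by rw [hx, Matrix.mulVec_mulVec, hPR, zero_mulVec]
  have hxx : x ⬝ᵥ x = 0 := by
    calc x ⬝ᵥ x = x ⬝ᵥ M *ᵥ Pi.single j 1 - (Pᵀ *ᵥ x) ⬝ᵥ (Pᵀ * M) *ᵥ Pi.single j 1 := by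
          nth_rewrite 2 [hx]
          rw [sub_mulVec, dotProduct_sub, ← Matrix.mulVec_mulVec, dotProduct_mulVec x P,
            ← mulVec_transpose]
      _ = 0 := by rw [h _ _ hu, hu, zero_dotProduct, sub_zero]
  simpa [x, mulVec_single] using congrFun (dotProduct_self_eq_zero.1 hxx) i

variable {C : Matrix m m ℝ} {D P : Matrix m κ ℝ}

theorem IsLocalMaxOn.first_order (h : IsLocalMaxOn (traceQuadLin C D) (stiefel m κ) P)
    (hC : Cᵀ = C) (hP : P ∈ stiefel m κ) :
    (2 : ℝ) • (C * P) + D = P * (Pᵀ * ((2 : ℝ) • (C * P) + D)) := by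
  refine eq_mul_transpose_mul_of_dotProduct_eq_zero hP fun u z hup => ?_
  have hdot : ∀ u z, u ⬝ᵥ ((2 : ℝ) • (C * P) + D) *ᵥ z
      = 2 * (u ⬝ᵥ C *ᵥ (P *ᵥ z)) + u ⬝ᵥ D *ᵥ z := fun u z => by
    rw [add_mulVec, smul_mulVec, ← Matrix.mulVec_mulVec, dotProduct_add, dotProduct_smul,
      smul_eq_mul]
  rcases eq_or_ne u 0 with rfl | hu
  · exact zero_dotProduct _
  rcases eq_or_ne z 0 with rfl | hz
  · rw [mulVec_zero, dotProduct_zero]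
  obtain ⟨r, hr, hru⟩ := exists_pos_sq_mul_dotProduct_self_eq_one hu
  obtain ⟨r', hr', hrz⟩ := exists_pos_sq_mul_dotProduct_self_eq_one hz
  have hunit := eq_zero_of_isLocalMax_sin_mul_add <| h.isLocalMax_stiefelCurve hC hP
    (u := r • u) (z := r' • z) (by simpa [sq, mul_assoc] using hru)
    (by rw [mulVec_smul, hup, smul_zero]) (by simpa [sq, mul_assoc] using hrz)
  rw [← hdot, mulVec_smul, smul_dotProduct, dotProduct_smul, smul_eq_mul, smul_eq_mul] at hunit
  simpa [hr.ne', hr'.ne'] using hunit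

theorem IsLocalMaxOn.second_order (h : IsLocalMaxOn (traceQuadLin C D) (stiefel m κ) P)
    (hC : Cᵀ = C) (hP : P ∈ stiefel m κ) {u : m → ℝ} (hup : Pᵀ *ᵥ u = 0) (z : κ → ℝ) :
    2 * (u ⬝ᵥ C *ᵥ u) * (z ⬝ᵥ z)
      ≤ (2 * ((P *ᵥ z) ⬝ᵥ C *ᵥ (P *ᵥ z)) + (P *ᵥ z) ⬝ᵥ D *ᵥ z) * (u ⬝ᵥ u) := by
  rcases eq_or_ne u 0 with rfl | hu
  · simp
  rcases eq_or_ne z 0 with rfl | hz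
  · simp
  obtain ⟨r, hr, hru⟩ := exists_pos_sq_mul_dotProduct_self_eq_one hu
  obtain ⟨r', hr', hrz⟩ := exists_pos_sq_mul_dotProduct_self_eq_one hz
  have hmax := h.isLocalMax_stiefelCurve hC hP (u := r • u) (z := r' • z)
    (by simpa [sq, mul_assoc] using hru) (by rw [mulVec_smul, hup, smul_zero])
    (by simpa [sq, mul_assoc] using hrz)
  rw [eq_zero_of_isLocalMax_sin_mul_add hmax] at hmax
  simp only [mul_zero, zero_add] at hmax
  have hunit := le_of_isLocalMax_one_sub_cos_mul hmax
  simp only [mulVec_smul, smul_dotProduct, dotProduct_smul, smul_eq_mul] at hunit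
  set W := (P *ᵥ z) ⬝ᵥ C *ᵥ (P *ᵥ z)
  set d := (P *ᵥ z) ⬝ᵥ D *ᵥ z
  calc 2 * (u ⬝ᵥ C *ᵥ u) * (z ⬝ᵥ z)
      = 2 * r ^ 2 * (u ⬝ᵥ C *ᵥ u) * ((u ⬝ᵥ u) * (z ⬝ᵥ z)) := by
        linear_combination (-2 * (u ⬝ᵥ C *ᵥ u) * (z ⬝ᵥ z)) * hru
    _ ≤ r' ^ 2 * (2 * W + d) * ((u ⬝ᵥ u) * (z ⬝ᵥ z)) :=
        mul_le_mul_of_nonneg_right (by linarith)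
          (mul_nonneg (dotProduct_self_nonneg u) (dotProduct_self_nonneg z))
    _ = (2 * W + d) * (u ⬝ᵥ u) := by linear_combination ((2 * W + d) * (u ⬝ᵥ u)) * hrz

end Optimality

section Stationary

variable {m κ : Type*} [Fintype m] [Fintype κ] {C : Matrix m m ℝ} {D P : Matrix m κ ℝ}

theorem mul_eq_mul_conj_of_first_order [DecidableEq κ] (hP : Pᵀ * P = 1)
    (hFO : (2 : ℝ) • (C * P) + D = P * (Pᵀ * ((2 : ℝ) • (C * P) + D))) :
    (C + (2⁻¹ : ℝ) • (D * Pᵀ + P * Dᵀ)) * P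
      = P * (Pᵀ * (C + (2⁻¹ : ℝ) • (D * Pᵀ + P * Dᵀ)) * P) := by
  have hPP : ∀ X : Matrix κ κ ℝ, Pᵀ * (P * X) = X := fun X => by
    rw [← Matrix.mul_assoc, hP, Matrix.one_mul]
  calc (C + (2⁻¹ : ℝ) • (D * Pᵀ + P * Dᵀ)) * P
      = (2⁻¹ : ℝ) • ((2 : ℝ) • (C * P) + D + P * (Dᵀ * P)) := by
        simp only [Matrix.add_mul, Matrix.smul_mul, Matrix.mul_assoc, hP, Matrix.mul_one]
        module
    _ = (2⁻¹ : ℝ) • (P * (Pᵀ * ((2 : ℝ) • (C * P) + D)) + P * (Dᵀ * P)) := by rw [← hFO]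
    _ = P * (Pᵀ * (C + (2⁻¹ : ℝ) • (D * Pᵀ + P * Dᵀ)) * P) := by
        simp only [Matrix.smul_mul, Matrix.mul_smul, Matrix.add_mul, Matrix.mul_add,
          Matrix.mul_assoc, hP, Matrix.mul_one, hPP]
        module

theorem dotProduct_mulVec_conj_of_perp {u : m → ℝ} (hup : Pᵀ *ᵥ u = 0) :
    u ⬝ᵥ (C + (2⁻¹ : ℝ) • (D * Pᵀ + P * Dᵀ)) *ᵥ u = u ⬝ᵥ C *ᵥ u := by
  have hup' : u ᵥ* P = 0 := by rwa [← mulVec_transpose]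
  simp only [add_mulVec, smul_mulVec, ← Matrix.mulVec_mulVec, dotProduct_add, dotProduct_smul,
    dotProduct_mulVec u P, hup', zero_dotProduct, mulVec_transpose, hup, mulVec_zero,
    dotProduct_zero, add_zero, smul_zero]

theorem dotProduct_mulVec_conj_of_range [DecidableEq κ] (hP : Pᵀ * P = 1) (z : κ → ℝ) :
    (P *ᵥ z) ⬝ᵥ (C + (2⁻¹ : ℝ) • (D * Pᵀ + P * Dᵀ)) *ᵥ (P *ᵥ z)
      = (P *ᵥ z) ⬝ᵥ C *ᵥ (P *ᵥ z) + (P *ᵥ z) ⬝ᵥ D *ᵥ z := by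
  have hz : Pᵀ *ᵥ (P *ᵥ z) = z := by rw [Matrix.mulVec_mulVec, hP, one_mulVec]
  simp only [add_mulVec, smul_mulVec, ← Matrix.mulVec_mulVec, dotProduct_add, dotProduct_smul,
    smul_eq_mul, hz]
  rw [dotProduct_mulVec _ P, ← mulVec_transpose, hz, dotProduct_mulVec z Dᵀ, vecMul_transpose,
    dotProduct_comm (D *ᵥ z)]
  ring

end Stationary

theorem IsLocalMaxOn.invariant_and_trace_eq_sum_top_eigenvalues {N k : ℕ} (hk : 0 < k)
    (hkN : k ≤ N) {C : Matrix (Fin N) (Fin N) ℝ} (hC : Cᵀ = C) {D P : Matrix (Fin N) (Fin k) ℝ}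
    (hmax : IsLocalMaxOn (traceQuadLin C D) (stiefel _ _) P) (hP : P ∈ stiefel _ _)
    (hD : ∀ z, 0 ≤ (P *ᵥ z) ⬝ᵥ D *ᵥ z) {τ : ℝ} (hτ : 0 < τ) {E : Matrix (Fin N) (Fin N) ℝ}
    (hE : E = τ • (C + (2⁻¹ : ℝ) • (D * Pᵀ + P * Dᵀ))) {μ : Fin N → ℝ} (hμ : Antitone μ)
    {Q : Matrix (Fin N) (Fin N) ℝ} (hQ : Qᵀ * Q = 1) (hEig : E = Q * diagonal μ * Qᵀ) :
    E * P = P * (Pᵀ * E * P) ∧ trace (Pᵀ * E * P) = ∑ i : Fin k, μ (Fin.castLE hkN i) := by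
  have hinv : E * P = P * (Pᵀ * E * P) := by
    rw [hE, Matrix.smul_mul, Matrix.mul_smul, Matrix.smul_mul, Matrix.mul_smul,
      mul_eq_mul_conj_of_first_order hP (hmax.first_order hC hP)]
  refine ⟨hinv, trace_eq_sum_top_eigenvalues_of_rayleigh_le hk hkN hμ hQ hEig hP hinv
    fun u z hup => ?_⟩
  have hSO := hmax.second_order hC hP hup z
  have hdu := mul_nonneg (hD z) (dotProduct_self_nonneg u)
  rw [hE, smul_mulVec, smul_mulVec, dotProduct_smul, dotProduct_smul, smul_eq_mul, smul_eq_mul,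
    dotProduct_mulVec_conj_of_perp hup, dotProduct_mulVec_conj_of_range hP, mul_assoc,
    mul_assoc]
  exact mul_le_mul_of_nonneg_left (by linarith) hτ.le

theorem sub_mul_le_sub_mul_of_div_rpow_le {a a' b b' θ : ℝ} (ha : 0 ≤ a) (hb : 0 < b)
    (hb' : 0 < b') (hθ0 : 0 ≤ θ) (hθ1 : θ ≤ 1) (h : a' / b' ^ θ ≤ a / b ^ θ) :
    a' - θ * (a / b) * b' ≤ a - θ * (a / b) * b := by
  have h1 : a' ≤ a * (b' / b) ^ θ := by
    rw [div_le_iff₀ (rpow_pos_of_pos hb' θ)] at h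
    rw [div_rpow hb'.le hb.le]
    linarith [show a / b ^ θ * b' ^ θ = a * (b' ^ θ / b ^ θ) by ring]
  have h2 : (b' / b) ^ θ ≤ 1 + θ * (b' / b - 1) := by
    simpa using rpow_one_add_le_one_add_mul_self (s := b' / b - 1)
      (by linarith [div_pos hb' hb]) hθ0 hθ1
  have h3 : a * (1 + θ * (b' / b - 1)) = a - θ * (a / b) * b + θ * (a / b) * b' := by
    field_simp
    ring
  nlinarith [mul_le_mul_of_nonneg_left h2 ha]

theorem IsLocalMaxOn.sub_mul_of_div_rpow {α : Type*} [TopologicalSpace α] {N D : α → ℝ}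
    {S : Set α} {a : α} {θ : ℝ} (h : IsLocalMaxOn (fun x => N x / D x ^ θ) S a) (hN : 0 ≤ N a)
    (hD : ∀ x ∈ S, 0 < D x) (ha : a ∈ S) (hθ0 : 0 ≤ θ) (hθ1 : θ ≤ 1) :
    IsLocalMaxOn (fun x => N x - θ * (N a / D a) * D x) S a := by
  filter_upwards [h, self_mem_nhdsWithin] with x hx hxS
  exact sub_mul_le_sub_mul_of_div_rpow_le hN (hD a ha) (hD x hxS) hθ0 hθ1 hx

section Blocks

variable {ι : Type*} [DecidableEq ι] {m : ι → Type*} [∀ s, Fintype (m s)] {κ : Type*}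

theorem transpose_mul_self_update [DecidableEq κ] {P : ∀ s, Matrix (m s) κ ℝ}
    (hP : ∀ s, (P s)ᵀ * P s = 1) {s : ι} {X : Matrix (m s) κ ℝ} (hX : X ∈ stiefel (m s) κ)
    (s' : ι) : (Function.update P s X s')ᵀ * Function.update P s X s' = 1 := by
  rcases eq_or_ne s' s with rfl | hs'
  · rw [Function.update_self]; exact hX
  · rw [Function.update_of_ne hs']; exact hP s'

theorem isLocalMaxOn_update [Fintype κ] [DecidableEq κ] {F : (∀ s, Matrix (m s) κ ℝ) → ℝ}
    {P : ∀ s, Matrix (m s) κ ℝ} (hP : ∀ s, (P s)ᵀ * P s = 1)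
    (hloc : ∃ ε > (0 : ℝ), ∀ Q : ∀ s, Matrix (m s) κ ℝ, (∀ s, (Q s)ᵀ * Q s = 1) →
      (∀ s i j, |Q s i j - P s i j| < ε) → F Q ≤ F P) (s : ι) :
    IsLocalMaxOn (fun X => F (Function.update P s X)) (stiefel (m s) κ) (P s) := by
  obtain ⟨ε, hε, h⟩ := hloc
  have hnear : ∀ᶠ X in 𝓝 (P s), ∀ i j, |X i j - P s i j| < ε := by
    simp only [eventually_all]
    intro i j
    have hcont : Continuous fun X : Matrix (m s) κ ℝ => X i j := continuous_id.matrix_elem i j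
    filter_upwards [hcont.tendsto (P s) (Metric.ball_mem_nhds _ hε)] with X hX
    rwa [Set.mem_preimage, Metric.mem_ball, Real.dist_eq] at hX
  filter_upwards [nhdsWithin_le_nhds hnear, self_mem_nhdsWithin] with X hX hXS
  rw [Function.update_eq_self]
  refine h _ (transpose_mul_self_update hP hXS) fun s' => ?_
  rcases eq_or_ne s' s with rfl | hs'
  · simpa using hX
  · simpa [Function.update_of_ne hs'] using fun _ _ => hε

variable [Fintype ι] [Fintype κ]

def blockNum (A : ∀ s t, Matrix (m s) (m t) ℝ) (Q : ∀ s, Matrix (m s) κ ℝ) : ℝ :=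
  ∑ s, ∑ t, trace ((Q s)ᵀ * A s t * Q t)

def blockDen (B : ∀ s, Matrix (m s) (m s) ℝ) (Q : ∀ s, Matrix (m s) κ ℝ) : ℝ :=
  ∑ s, trace ((Q s)ᵀ * B s * Q s)

theorem blockDen_update (B : ∀ s, Matrix (m s) (m s) ℝ) (P : ∀ s, Matrix (m s) κ ℝ) (s : ι)
    (X : Matrix (m s) κ ℝ) :
    blockDen B (Function.update P s X)
      = trace (Xᵀ * B s * X) + ∑ s' ∈ univ.erase s, trace ((P s')ᵀ * B s' * P s') := by
  rw [blockDen, ← add_sum_erase _ _ (mem_univ s), Function.update_self]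
  congr 1
  exact sum_congr rfl fun s' hs' => by rw [Function.update_of_ne (ne_of_mem_erase hs')]

theorem blockNum_update {A : ∀ s t, Matrix (m s) (m t) ℝ} (hA : ∀ s t, (A s t)ᵀ = A t s)
    (P : ∀ s, Matrix (m s) κ ℝ) (s : ι) (X : Matrix (m s) κ ℝ) :
    blockNum A (Function.update P s X)
      = trace (Xᵀ * A s s * X) + trace (Xᵀ * ((2 : ℝ) • ∑ t' ∈ univ.erase s, A s t' * P t'))
        + ∑ s' ∈ univ.erase s, ∑ t' ∈ univ.erase s, trace ((P s')ᵀ * A s' t' * P t') := by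
  set Pₛ := Function.update P s X
  have hself : Pₛ s = X := Function.update_self s X P
  have hother : ∀ t ∈ univ.erase s, Pₛ t = P t := fun t ht =>
    Function.update_of_ne (ne_of_mem_erase ht) X P
  have hcross : ∀ s', trace ((P s')ᵀ * A s' s * X) = trace (Xᵀ * (A s s' * P s')) := fun s' => by
    rw [← trace_transpose]
    simp only [transpose_mul, transpose_transpose, hA, Matrix.mul_assoc]
  have hrow : ∀ s', ∑ t', trace ((Pₛ s')ᵀ * A s' t' * Pₛ t')
      = trace ((Pₛ s')ᵀ * A s' s * X) + ∑ t' ∈ univ.erase s, trace ((Pₛ s')ᵀ * A s' t' * P t') :=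
    fun s' => by
      rw [← add_sum_erase _ _ (mem_univ s), hself]
      exact congrArg _ (sum_congr rfl fun t' ht' => by rw [hother t' ht'])
  have hrest : ∑ s' ∈ univ.erase s, ∑ t', trace ((Pₛ s')ᵀ * A s' t' * Pₛ t')
      = ∑ s' ∈ univ.erase s, (trace (Xᵀ * (A s s' * P s'))
        + ∑ t' ∈ univ.erase s, trace ((P s')ᵀ * A s' t' * P t')) :=
    sum_congr rfl fun s' hs' => by rw [hrow, hother s' hs', hcross]
  rw [blockNum, ← add_sum_erase _ _ (mem_univ s), hrest, hrow, hself,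
    sum_add_distrib, Matrix.mul_smul, trace_smul, Matrix.mul_sum, trace_sum, smul_eq_mul]
  simp only [Matrix.mul_assoc]
  ring

variable [∀ s, DecidableEq (m s)] {k : ℕ}

-- `Â_s`, `B̂_s` and `D̂_s` of the paper
def shiftedA (A : ∀ s t, Matrix (m s) (m t) ℝ) (P : ∀ s, Matrix (m s) (Fin k) ℝ) (s : ι) :
    Matrix (m s) (m s) ℝ :=
  A s s + ((∑ s' ∈ univ.erase s, ∑ t' ∈ univ.erase s, trace ((P s')ᵀ * A s' t' * P t'))
    / (k : ℝ)) • 1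

def shiftedB (B : ∀ s, Matrix (m s) (m s) ℝ) (P : ∀ s, Matrix (m s) (Fin k) ℝ) (s : ι) :
    Matrix (m s) (m s) ℝ :=
  B s + ((∑ s' ∈ univ.erase s, trace ((P s')ᵀ * B s' * P s')) / (k : ℝ)) • 1

def couplingD (A : ∀ s t, Matrix (m s) (m t) ℝ) (P : ∀ s, Matrix (m s) (Fin k) ℝ) (s : ι) :
    Matrix (m s) (Fin k) ℝ :=
  (2 : ℝ) • ∑ s' ∈ univ.erase s, A s s' * P s'

theorem transpose_shiftedA {A : ∀ s t, Matrix (m s) (m t) ℝ} (hA : ∀ s t, (A s t)ᵀ = A t s)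
    (P : ∀ s, Matrix (m s) (Fin k) ℝ) (s : ι) : (shiftedA A P s)ᵀ = shiftedA A P s := by
  rw [shiftedA, transpose_add, transpose_smul, transpose_one, hA]

theorem transpose_shiftedB {B : ∀ s, Matrix (m s) (m s) ℝ} {s : ι} (hB : (B s)ᵀ = B s)
    (P : ∀ s, Matrix (m s) (Fin k) ℝ) : (shiftedB B P s)ᵀ = shiftedB B P s := by
  rw [shiftedB, transpose_add, transpose_smul, transpose_one, hB]

theorem trace_shiftedB (hk : 0 < k) (B : ∀ s, Matrix (m s) (m s) ℝ)
    (P : ∀ s, Matrix (m s) (Fin k) ℝ) {s : ι} {X : Matrix (m s) (Fin k) ℝ}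
    (hX : X ∈ stiefel (m s) (Fin k)) :
    trace (Xᵀ * shiftedB B P s * X) = blockDen B (Function.update P s X) := by
  rw [shiftedB, trace_conj_add_smul_one hX, Fintype.card_fin, div_mul_cancel₀ _ (by positivity),
    blockDen_update]

theorem traceQuadLin_shiftedA (hk : 0 < k) {A : ∀ s t, Matrix (m s) (m t) ℝ}
    (hA : ∀ s t, (A s t)ᵀ = A t s) (P : ∀ s, Matrix (m s) (Fin k) ℝ) {s : ι}
    {X : Matrix (m s) (Fin k) ℝ} (hX : X ∈ stiefel (m s) (Fin k)) :
    traceQuadLin (shiftedA A P s) (couplingD A P s) X = blockNum A (Function.update P s X) := by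
  rw [traceQuadLin, shiftedA, trace_conj_add_smul_one hX, Fintype.card_fin,
    div_mul_cancel₀ _ (by positivity), blockNum_update hA, couplingD]
  ring

theorem isLocalMaxOn_traceQuadLin_block (hk : 0 < k) {A : ∀ s t, Matrix (m s) (m t) ℝ}
    (hA : ∀ s t, (A s t)ᵀ = A t s) {B : ∀ s, Matrix (m s) (m s) ℝ}
    (hpos : ∀ Q : ∀ s, Matrix (m s) (Fin k) ℝ, (∀ s, (Q s)ᵀ * Q s = 1) → 0 < blockDen B Q)
    {θ : ℝ} (hθ0 : 0 ≤ θ) (hθ1 : θ ≤ 1) {P : ∀ s, Matrix (m s) (Fin k) ℝ}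
    (hP : ∀ s, (P s)ᵀ * P s = 1)
    (hloc : ∃ ε > (0 : ℝ), ∀ Q : ∀ s, Matrix (m s) (Fin k) ℝ, (∀ s, (Q s)ᵀ * Q s = 1) →
      (∀ s i j, |Q s i j - P s i j| < ε) →
        blockNum A Q / blockDen B Q ^ θ ≤ blockNum A P / blockDen B P ^ θ)
    (hf : 0 ≤ blockNum A P / blockDen B P ^ θ) (s : ι) :
    IsLocalMaxOn (traceQuadLin (shiftedA A P s
        - (θ * (blockNum A P / blockDen B P)) • shiftedB B P s) (couplingD A P s))
      (stiefel (m s) (Fin k)) (P s) := by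
  have hblock : IsLocalMaxOn (fun X => blockNum A (Function.update P s X)
      / blockDen B (Function.update P s X) ^ θ) (stiefel _ _) (P s) :=
    isLocalMaxOn_update hP hloc s
  have hnum : 0 ≤ blockNum A (Function.update P s (P s)) := by
    rw [Function.update_eq_self]
    simpa using (le_div_iff₀ (rpow_pos_of_pos (hpos P hP) θ)).1 hf
  refine (hblock.sub_mul_of_div_rpow hnum (fun X hX => hpos _ (transpose_mul_self_update hP hX))
    (hP s) hθ0 hθ1).congr (eventuallyEq_nhdsWithin_of_eqOn fun X hX => ?_) (hP s)
  simp only [traceQuadLin_sub_smul, traceQuadLin_shiftedA hk hA P hX, trace_shiftedB hk B P hX,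
    Function.update_eq_self]

end Blocks

theorem stmt18_general {v k : ℕ} (hk : 1 ≤ k)
    (n : Fin v → ℕ) (hn : ∀ s, k ≤ n s)
    (A : ∀ s t : Fin v, Matrix (Fin (n s)) (Fin (n t)) ℝ)
    (hA : ∀ s t, (A s t)ᵀ = A t s)
    (B : ∀ s : Fin v, Matrix (Fin (n s)) (Fin (n s)) ℝ)
    (hB : ∀ s, (B s).PosSemidef)
    (hpos : ∀ P : ∀ s : Fin v, Matrix (Fin (n s)) (Fin k) ℝ,
      (∀ s, (P s)ᵀ * P s = 1) → 0 < ∑ s, trace ((P s)ᵀ * B s * P s))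
    (θ : ℝ) (hθ0 : 0 ≤ θ) (hθ1 : θ ≤ 1)
    (P : ∀ s : Fin v, Matrix (Fin (n s)) (Fin k) ℝ)
    (hP : ∀ s, (P s)ᵀ * P s = 1)
    -- `{P_s}` is a local maximizer
    (hloc : ∃ ε > (0:ℝ), ∀ Q : ∀ s : Fin v, Matrix (Fin (n s)) (Fin k) ℝ,
      (∀ s, (Q s)ᵀ * Q s = 1) → (∀ s i j, |Q s i j - P s i j| < ε) →
      fmv n A B θ Q ≤ fmv n A B θ P)
    (hf : 0 ≤ fmv n A B θ P)
    (s : Fin v)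
    -- the quantities `α_s, β_s, D̂_s, Â_s, B̂_s, E_s` evaluated at `{P_s}`
    (αs βs : ℝ)
    (hαs : αs = ∑ s' ∈ univ.erase s, ∑ t' ∈ univ.erase s,
      trace ((P s')ᵀ * A s' t' * P t'))
    (hβs : βs = ∑ s' ∈ univ.erase s, trace ((P s')ᵀ * B s' * P s'))
    (Dh : Matrix (Fin (n s)) (Fin k) ℝ)
    (hDh : Dh = (2 : ℝ) • ∑ s' ∈ univ.erase s, A s s' * P s')
    (Ah Bh : Matrix (Fin (n s)) (Fin (n s)) ℝ)
    (hAh : Ah = A s s + (αs / (k : ℝ)) • (1 : Matrix (Fin (n s)) (Fin (n s)) ℝ))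
    (hBh : Bh = B s + (βs / (k : ℝ)) • (1 : Matrix (Fin (n s)) (Fin (n s)) ℝ))
    (Es : Matrix (Fin (n s)) (Fin (n s)) ℝ)
    (hEs : Es = (2 / trace ((P s)ᵀ * Bh * P s) ^ θ) •
      (Ah + (2⁻¹ : ℝ) • (Dh * (P s)ᵀ + P s * Dhᵀ) - (θ * fmv n A B 1 P) • Bh))
    -- `μ 0 ≥ ⋯ ≥ μ (n_s − 1)` are the eigenvalues of the symmetric matrix `E_s`
    (μ : Fin (n s) → ℝ) (hμ : Antitone μ)
    (Q : Matrix (Fin (n s)) (Fin (n s)) ℝ) (hQ : Qᵀ * Q = 1)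
    (hEig : Es = Q * Matrix.diagonal μ * Qᵀ)
    -- assumption: `(P_s)ᵀ D̂_s` is symmetric positive semidefinite
    (hpsd : ((P s)ᵀ * Dh).PosSemidef) :
    Es * P s = P s * ((P s)ᵀ * Es * P s)
      ∧ trace ((P s)ᵀ * Es * P s) = ∑ i : Fin k, μ (Fin.castLE (hn s) i) := by
  obtain rfl : Dh = couplingD A P s := hDh
  obtain rfl : Ah = shiftedA A P s := by rw [hAh, hαs]; rfl
  obtain rfl : Bh = shiftedB B P s := by rw [hBh, hβs]; rfl
  have hf₁ : fmv n A B 1 P = blockNum A P / blockDen B P := by rw [fmv, rpow_one]; rfl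
  have hBs : (B s)ᵀ = B s := by
    simpa [conjTranspose_eq_transpose_of_trivial] using (hB s).isHermitian.eq
  have hD : ∀ z, 0 ≤ (P s *ᵥ z) ⬝ᵥ couplingD A P s *ᵥ z := fun z => by
    have := hpsd.dotProduct_mulVec_nonneg z
    rwa [star_trivial, ← Matrix.mulVec_mulVec, dotProduct_mulVec z (P s)ᵀ,
      vecMul_transpose] at this
  refine (isLocalMaxOn_traceQuadLin_block hk hA hpos hθ0 hθ1 hP hloc hf s
    ).invariant_and_trace_eq_sum_top_eigenvalues hk (hn s) ?_ (hP s) hD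
    (τ := 2 / trace ((P s)ᵀ * shiftedB B P s * P s) ^ θ) ?_ ?_ hμ hQ hEig
  · rw [transpose_sub, transpose_smul, transpose_shiftedA hA, transpose_shiftedB hBs]
  · rw [trace_shiftedB hk B P (hP s), Function.update_eq_self]
    exact div_pos two_pos (rpow_pos_of_pos (hpos P hP) θ)
  · rw [hEs, hf₁]
    congr 1
    abel

/-- Theorem 5.1(b): at a local maximizer of the multi-view objective with nonnegative
objective value, if `(P_s)ᵀ D̂_s ⪰ 0` then `P_s` is an orthonormal basis matrix of the
invariant subspace of `E_s(P_s)` associated with its `k` largest eigenvalues. -/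
theorem stmt18 {v k : ℕ} (hv : 1 ≤ v) (hk : 1 ≤ k)
    (n : Fin v → ℕ) (hn : ∀ s, k ≤ n s)
    (A : ∀ s t : Fin v, Matrix (Fin (n s)) (Fin (n t)) ℝ)
    (hA : ∀ s t, (A s t)ᵀ = A t s)
    (B : ∀ s : Fin v, Matrix (Fin (n s)) (Fin (n s)) ℝ)
    (hB : ∀ s, (B s).PosSemidef)
    (hpos : ∀ P : ∀ s : Fin v, Matrix (Fin (n s)) (Fin k) ℝ,
      (∀ s, (P s)ᵀ * P s = 1) → 0 < ∑ s, trace ((P s)ᵀ * B s * P s))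
    (θ : ℝ) (hθ0 : 0 ≤ θ) (hθ1 : θ ≤ 1)
    (P : ∀ s : Fin v, Matrix (Fin (n s)) (Fin k) ℝ)
    (hP : ∀ s, (P s)ᵀ * P s = 1)
    -- `{P_s}` is a local maximizer
    (hloc : ∃ ε > (0:ℝ), ∀ Q : ∀ s : Fin v, Matrix (Fin (n s)) (Fin k) ℝ,
      (∀ s, (Q s)ᵀ * Q s = 1) → (∀ s i j, |Q s i j - P s i j| < ε) →
      fmv n A B θ Q ≤ fmv n A B θ P)
    (hf : 0 ≤ fmv n A B θ P)
    (s : Fin v)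
    -- the quantities `α_s, β_s, D̂_s, Â_s, B̂_s, E_s` evaluated at `{P_s}`
    (αs βs : ℝ)
    (hαs : αs = ∑ s' ∈ univ.erase s, ∑ t' ∈ univ.erase s,
      trace ((P s')ᵀ * A s' t' * P t'))
    (hβs : βs = ∑ s' ∈ univ.erase s, trace ((P s')ᵀ * B s' * P s'))
    (Dh : Matrix (Fin (n s)) (Fin k) ℝ)
    (hDh : Dh = (2 : ℝ) • ∑ s' ∈ univ.erase s, A s s' * P s')
    (Ah Bh : Matrix (Fin (n s)) (Fin (n s)) ℝ)
    (hAh : Ah = A s s + (αs / (k : ℝ)) • (1 : Matrix (Fin (n s)) (Fin (n s)) ℝ))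
    (hBh : Bh = B s + (βs / (k : ℝ)) • (1 : Matrix (Fin (n s)) (Fin (n s)) ℝ))
    (Es : Matrix (Fin (n s)) (Fin (n s)) ℝ)
    (hEs : Es = (2 / trace ((P s)ᵀ * Bh * P s) ^ θ) •
      (Ah + (2⁻¹ : ℝ) • (Dh * (P s)ᵀ + P s * Dhᵀ) - (θ * fmv n A B 1 P) • Bh))
    -- `μ 0 ≥ ⋯ ≥ μ (n_s − 1)` are the eigenvalues of the symmetric matrix `E_s`
    (μ : Fin (n s) → ℝ) (hμ : Antitone μ)
    (Q : Matrix (Fin (n s)) (Fin (n s)) ℝ) (hQ : Qᵀ * Q = 1)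
    (hEig : Es = Q * Matrix.diagonal μ * Qᵀ)
    -- assumption: `(P_s)ᵀ D̂_s` is symmetric positive semidefinite
    (hpsd : ((P s)ᵀ * Dh).PosSemidef) :
    Es * P s = P s * ((P s)ᵀ * Es * P s)
      ∧ trace ((P s)ᵀ * Es * P s) = ∑ i : Fin k, μ (Fin.castLE (hn s) i) :=
  stmt18_general hk n hn A hA B hB hpos θ hθ0 hθ1 P hP hloc hf s αs βs hαs hβs Dh hDh Ah Bh hAh hBh
    Es hEs μ hμ Q hQ hEig hpsd
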